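/- arXiv:2005.12954 — 4 statements merged into one kernel-verified Lean document; each statement's English description precedes it below -/
import Mathlib

section
/- Let $\rho_1 \colon A \to B \otimes Q_1$ and $\rho_2 \colon A \to B \otimes Q_2$ be linear maps of vector spaces over a field $F$. Then $\cosupp\rho_1 \subseteq \cosupp\rho_2$ if and only if there exists a linear map $\tau \colon \supp\rho_2 \to \supp\rho_1$ with $(\mathrm{id}_B\otimes\tau)\circ\rho_2' = \rho_1'$, where $\rho_i'$ denotes the corestriction of $\rho_i$ to $B\otimes\supp\rho_i$. Moreover, such a $\tau$, when it exists, is unique and surjective. -/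
/-!
For `ρ : A → B ⊗ V` let `K_ρ : B^* ⊗ A → V`, `φ ⊗ a ↦ (φ ⊗ id)(ρ a)`. Since `B` is flat and the
slices `φ ⊗ id` separate the points of `B ⊗ V`, the support of `ρ` is the range of `K_ρ`, `ρ` is
determined by `K_ρ`, and `K_{(id ⊗ f) ∘ ρ} = f ∘ K_ρ`. For `ψ ∈ V^*` the functional `ψ ∘ K_ρ` is
`φ ⊗ a ↦ φ((id ⊗ ψ)(ρ a))`, which only depends on the cosupport element `(id ⊗ ψ) ∘ ρ`; hence
`cosupp ρ₁ ⊆ cosupp ρ₂` gives `ker K_{ρ₂} ⊆ ker K_{ρ₁}`, and `τ` is the map induced on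
`range K_{ρ₂} = supp ρ₂`. Corestrictions to the support have full support (so `K` is onto), which
gives uniqueness and surjectivity; corestricting does not change the cosupport, because over a
field the dual of an injection is onto.
-/

open TensorProduct

variable {F A B Q : Type*} [Field F] [AddCommGroup A] [Module F A]
  [AddCommGroup B] [Module F B] [AddCommGroup Q] [Module F Q]

/-- `ρ(A) ⊆ B ⊗ Q₁` for a subspace `Q₁ ⊆ Q`. -/
def LiftsTo (ρ : A →ₗ[F] B ⊗[F] Q) (Q₁ : Submodule F Q) : Prop :=
  ∀ a : A, ρ a ∈ LinearMap.range (LinearMap.lTensor B Q₁.subtype)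

/-- The support of `ρ : A → B ⊗ Q`: the smallest subspace `Q₁ ⊆ Q` with `ρ(A) ⊆ B ⊗ Q₁`. -/
noncomputable def lsupp (ρ : A →ₗ[F] B ⊗[F] Q) : Submodule F Q :=
  sInf {Q₁ : Submodule F Q | LiftsTo ρ Q₁}

/-- The linear map `Q^* → Hom(A,B)` sending `q^*` to `(id_B ⊗ q^*) ∘ ρ`. -/
noncomputable def cosuppL (ρ : A →ₗ[F] B ⊗[F] Q) :
    Module.Dual F Q →ₗ[F] (A →ₗ[F] B) where
  toFun q := (TensorProduct.rid F B).toLinearMap ∘ₗ LinearMap.lTensor B q ∘ₗ ρ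
  map_add' q₁ q₂ := by
    simp [LinearMap.lTensor_add, LinearMap.add_comp, LinearMap.comp_add]
  map_smul' c q := by
    simp [LinearMap.lTensor_smul, LinearMap.smul_comp, LinearMap.comp_smul]

/-- The cosupport of `ρ : A → B ⊗ Q`: the image of `Q^* → Hom(A,B)`, `q^* ↦ (id_B ⊗ q^*) ∘ ρ`. -/
noncomputable def lcosupp (ρ : A →ₗ[F] B ⊗[F] Q) : Submodule F (A →ₗ[F] B) :=
  LinearMap.range (cosuppL ρ)

variable {Q₂ : Type*} [AddCommGroup Q₂] [Module F Q₂]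

section

open LinearMap

lemma LinearMap.exists_comp_eq_of_ker_le {R M N P : Type*} [Ring R] [AddCommGroup M]
    [Module R M] [AddCommGroup N] [Module R N] [AddCommGroup P] [Module R P] {g : M →ₗ[R] N}
    {f : M →ₗ[R] P} (h : ker g ≤ ker f) (hg : Function.Surjective g) : ∃ τ, τ ∘ₗ g = f :=
  ⟨(ker g).liftQ f h ∘ₗ (g.quotKerEquivOfSurjective hg).symm.toLinearMap, by
    ext x
    simp only [coe_comp, Function.comp_apply, LinearEquiv.coe_coe,
      quotKerEquivOfSurjective_symm_apply, Submodule.liftQ_apply]⟩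

variable {V W : Type*} [AddCommGroup V] [Module F V] [AddCommGroup W] [Module F W]

noncomputable def dualSlice : Module.Dual F B →ₗ[F] B ⊗[F] V →ₗ[F] V :=
  llcomp F _ _ _ (TensorProduct.lid F V).toLinearMap ∘ₗ rTensorHom V

lemma dualSlice_apply (φ : Module.Dual F B) (t : B ⊗[F] V) :
    dualSlice φ t = TensorProduct.lid F V (rTensor V φ t) := rfl

@[simp] lemma dualSlice_tmul (φ : Module.Dual F B) (b : B) (v : V) :
    dualSlice φ (b ⊗ₜ[F] v) = φ b • v := by
  simp [dualSlice]

lemma dualSlice_lTensor (φ : Module.Dual F B) (f : V →ₗ[F] W) (t : B ⊗[F] V) :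
    dualSlice φ (lTensor B f t) = f (dualSlice φ t) := by
  induction t using TensorProduct.induction_on with
  | zero => simp
  | tmul b v => simp
  | add x y hx hy => simp only [map_add, hx, hy]

lemma apply_dualSlice (φ : Module.Dual F B) (ψ : Module.Dual F V) (t : B ⊗[F] V) :
    ψ (dualSlice φ t) = φ (TensorProduct.rid F B (lTensor B ψ t)) := by
  induction t using TensorProduct.induction_on with
  | zero => simp
  | tmul b v => simp [mul_comm]
  | add x y hx hy => simp only [map_add, hx, hy]

lemma eq_zero_of_forall_dualSlice_eq_zero {t : B ⊗[F] V} (h : ∀ φ, dualSlice φ t = 0) :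
    t = 0 := by
  classical
  let b := Module.Basis.ofVectorSpace F B
  let e := LinearEquiv.rTensor V b.repr ≪≫ₗ TensorProduct.finsuppScalarLeft F V _
  refine e.injective ?_
  rw [map_zero]
  ext i
  rw [Finsupp.zero_apply, ← h (b.coord i)]
  simp only [e, LinearEquiv.trans_apply, TensorProduct.finsuppScalarLeft_apply, dualSlice_apply,
    Module.Basis.coord, rTensor_comp_apply]
  rfl

lemma mem_range_lTensor_subtype_iff {P : Submodule F V} {t : B ⊗[F] V} :
    t ∈ range (lTensor B P.subtype) ↔ ∀ φ, dualSlice φ t ∈ P := by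
  constructor
  · rintro ⟨u, rfl⟩ φ
    rw [dualSlice_lTensor]
    exact (dualSlice φ u).2
  · intro h
    rw [← (Module.Flat.lTensor_exact B (exact_subtype_mkQ P)).linearMap_ker_eq, mem_ker]
    refine eq_zero_of_forall_dualSlice_eq_zero fun φ => ?_
    rw [dualSlice_lTensor, Submodule.mkQ_apply, Submodule.Quotient.mk_eq_zero]
    exact h φ

noncomputable def suppMap (ρ : A →ₗ[F] B ⊗[F] V) : Module.Dual F B ⊗[F] A →ₗ[F] V :=
  TensorProduct.lift (lcomp F V ρ ∘ₗ dualSlice)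

@[simp] lemma suppMap_tmul (ρ : A →ₗ[F] B ⊗[F] V) (φ : Module.Dual F B) (a : A) :
    suppMap ρ (φ ⊗ₜ[F] a) = dualSlice φ (ρ a) := rfl

lemma liftsTo_iff_range_suppMap_le {ρ : A →ₗ[F] B ⊗[F] V} {P : Submodule F V} :
    LiftsTo ρ P ↔ range (suppMap ρ) ≤ P := by
  rw [range_eq_map, ← TensorProduct.span_tmul_eq_top, Submodule.map_span, Submodule.span_le,
    Set.image_subset_iff]
  simp only [LiftsTo, mem_range_lTensor_subtype_iff]
  exact ⟨fun h _ ⟨φ, a, hx⟩ => hx ▸ h a φ, fun h a φ => h ⟨φ, a, rfl⟩⟩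

lemma lsupp_eq_range_suppMap (ρ : A →ₗ[F] B ⊗[F] V) : lsupp ρ = range (suppMap ρ) := by
  simp only [lsupp, liftsTo_iff_range_suppMap_le]
  exact csInf_Ici

lemma suppMap_lTensor_comp (f : V →ₗ[F] W) (ρ : A →ₗ[F] B ⊗[F] V) :
    suppMap (lTensor B f ∘ₗ ρ) = f ∘ₗ suppMap ρ :=
  TensorProduct.ext' fun φ a => dualSlice_lTensor φ f (ρ a)

lemma suppMap_injective : Function.Injective (suppMap : (A →ₗ[F] B ⊗[F] V) → _) := by
  intro ρ ρ' h
  ext a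
  rw [← sub_eq_zero]
  refine eq_zero_of_forall_dualSlice_eq_zero fun φ => ?_
  rw [map_sub, ← suppMap_tmul, ← suppMap_tmul, h, sub_self]

lemma surjective_suppMap {ρ : A →ₗ[F] B ⊗[F] V} (hρ : lsupp ρ = ⊤) :
    Function.Surjective (suppMap ρ) :=
  range_eq_top.mp (lsupp_eq_range_suppMap ρ ▸ hρ)

lemma lsupp_lTensor_comp (f : V →ₗ[F] W) (ρ : A →ₗ[F] B ⊗[F] V) :
    lsupp (lTensor B f ∘ₗ ρ) = (lsupp ρ).map f := by
  rw [lsupp_eq_range_suppMap, lsupp_eq_range_suppMap, suppMap_lTensor_comp, range_comp]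

lemma lsupp_eq_top_of_lTensor_subtype_comp_eq {ρ : A →ₗ[F] B ⊗[F] V}
    {ρ' : A →ₗ[F] B ⊗[F] lsupp ρ} (h : lTensor B (lsupp ρ).subtype ∘ₗ ρ' = ρ) : lsupp ρ' = ⊤ := by
  apply Submodule.map_injective_of_injective (lsupp ρ).injective_subtype
  rw [← lsupp_lTensor_comp, h, Submodule.map_subtype_top]

lemma surjective_of_lsupp_lTensor_comp_eq_top {f : V →ₗ[F] W} {ρ : A →ₗ[F] B ⊗[F] V}
    (h : lsupp (lTensor B f ∘ₗ ρ) = ⊤) : Function.Surjective f :=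
  range_eq_top.mp (eq_top_iff.mpr (h ▸ lsupp_lTensor_comp f ρ ▸ map_le_range))

lemma lTensor_comp_injective {ρ : A →ₗ[F] B ⊗[F] V} (hρ : lsupp ρ = ⊤) :
    Function.Injective fun σ : V →ₗ[F] W => lTensor B σ ∘ₗ ρ := by
  intro σ σ' h
  have h' := congrArg suppMap h
  simp only [suppMap_lTensor_comp] at h'
  exact (cancel_right (surjective_suppMap hρ)).mp h'

lemma cosuppL_apply (ρ : A →ₗ[F] B ⊗[F] V) (ψ : Module.Dual F V) (a : A) :
    cosuppL ρ ψ a = TensorProduct.rid F B (lTensor B ψ (ρ a)) := rfl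

lemma cosuppL_lTensor_comp (f : V →ₗ[F] W) (ρ : A →ₗ[F] B ⊗[F] V) :
    cosuppL (lTensor B f ∘ₗ ρ) = cosuppL ρ ∘ₗ f.dualMap := by
  ext ψ a
  rw [comp_apply, cosuppL_apply, cosuppL_apply, comp_apply, ← lTensor_comp_apply]
  rfl

lemma lcosupp_lTensor_comp_le (f : V →ₗ[F] W) (ρ : A →ₗ[F] B ⊗[F] V) :
    lcosupp (lTensor B f ∘ₗ ρ) ≤ lcosupp ρ := by
  rw [lcosupp, cosuppL_lTensor_comp, range_comp]
  exact map_le_range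

lemma lcosupp_eq_of_lTensor_subtype_comp_eq {ρ : A →ₗ[F] B ⊗[F] V} {P : Submodule F V}
    {ρ' : A →ₗ[F] B ⊗[F] P} (h : lTensor B P.subtype ∘ₗ ρ' = ρ) : lcosupp ρ = lcosupp ρ' := by
  have hdual : range P.subtype.dualMap = ⊤ :=
    range_eq_top.mpr (dualMap_surjective_of_injective P.injective_subtype)
  rw [← h, lcosupp, cosuppL_lTensor_comp, range_comp_of_range_eq_top _ hdual, lcosupp]

lemma ker_suppMap_le_of_lcosupp_le {ρ₁ : A →ₗ[F] B ⊗[F] V} {ρ₂ : A →ₗ[F] B ⊗[F] W}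
    (h : lcosupp ρ₁ ≤ lcosupp ρ₂) : ker (suppMap ρ₂) ≤ ker (suppMap ρ₁) := by
  intro x hx
  rw [mem_ker, ← Module.forall_dual_apply_eq_zero_iff F]
  intro ψ
  obtain ⟨p, hp⟩ := h ⟨ψ, rfl⟩
  have hψ : ψ ∘ₗ suppMap ρ₁ = p ∘ₗ suppMap ρ₂ := TensorProduct.ext' fun φ a => by
    simp only [comp_apply, suppMap_tmul, apply_dualSlice, ← cosuppL_apply, hp]
  rw [← comp_apply ψ, hψ, comp_apply, mem_ker.mp hx, map_zero]

lemma exists_lTensor_comp_eq_of_lcosupp_le {ρ₁ : A →ₗ[F] B ⊗[F] V} {ρ₂ : A →ₗ[F] B ⊗[F] W}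
    (hρ₂ : lsupp ρ₂ = ⊤) (h : lcosupp ρ₁ ≤ lcosupp ρ₂) :
    ∃ τ : W →ₗ[F] V, lTensor B τ ∘ₗ ρ₂ = ρ₁ := by
  have hker := ker_suppMap_le_of_lcosupp_le h
  have hs := surjective_suppMap hρ₂
  -- naming `M` lets the tensor product's instances be synthesized before unification
  obtain ⟨τ, hτ⟩ := exists_comp_eq_of_ker_le (M := Module.Dual F B ⊗[F] A) hker hs
  refine ⟨τ, suppMap_injective ?_⟩
  rw [suppMap_lTensor_comp, hτ]

end

/-- `cosupp ρ₁ ⊆ cosupp ρ₂` iff there is a linear map `τ : supp ρ₂ → supp ρ₁` with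
`(id_B ⊗ τ) ∘ ρ₂' = ρ₁'`, where `ρᵢ'` is the corestriction of `ρᵢ` to `B ⊗ supp ρᵢ`.
Moreover such a `τ`, when it exists, is unique and surjective. -/
theorem lcosupp_le_iff_exists_factor (ρ₁ : A →ₗ[F] B ⊗[F] Q) (ρ₂ : A →ₗ[F] B ⊗[F] Q₂)
    (ρ₁' : A →ₗ[F] B ⊗[F] (lsupp ρ₁)) (hρ₁ : LinearMap.lTensor B (lsupp ρ₁).subtype ∘ₗ ρ₁' = ρ₁)
    (ρ₂' : A →ₗ[F] B ⊗[F] (lsupp ρ₂)) (hρ₂ : LinearMap.lTensor B (lsupp ρ₂).subtype ∘ₗ ρ₂' = ρ₂) :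
    (lcosupp ρ₁ ≤ lcosupp ρ₂ ↔
      ∃ τ : (lsupp ρ₂) →ₗ[F] (lsupp ρ₁), LinearMap.lTensor B τ ∘ₗ ρ₂' = ρ₁') ∧
    (∀ τ τ' : (lsupp ρ₂) →ₗ[F] (lsupp ρ₁),
      LinearMap.lTensor B τ ∘ₗ ρ₂' = ρ₁' → LinearMap.lTensor B τ' ∘ₗ ρ₂' = ρ₁' → τ = τ') ∧
    (∀ τ : (lsupp ρ₂) →ₗ[F] (lsupp ρ₁),
      LinearMap.lTensor B τ ∘ₗ ρ₂' = ρ₁' → Function.Surjective τ) := by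
  have hfull₁ := lsupp_eq_top_of_lTensor_subtype_comp_eq hρ₁
  have hfull₂ := lsupp_eq_top_of_lTensor_subtype_comp_eq hρ₂
  rw [lcosupp_eq_of_lTensor_subtype_comp_eq hρ₁, lcosupp_eq_of_lTensor_subtype_comp_eq hρ₂]
  refine ⟨⟨exists_lTensor_comp_eq_of_lcosupp_le hfull₂, ?_⟩, ?_, ?_⟩
  · rintro ⟨τ, rfl⟩
    exact lcosupp_lTensor_comp_le τ ρ₂'
  · exact fun τ τ' hτ hτ' => lTensor_comp_injective hfull₂ (hτ.trans hτ'.symm)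
  · rintro τ rfl
    exact surjective_of_lsupp_lTensor_comp_eq_top hfull₁
end

section
/- Let $\rho_1 \colon A \to B \otimes Q_1$ and $\rho_2 \colon A \to B \otimes Q_2$ be linear maps of vector spaces over a field $F$ with equal cosupports, i.e. $\cosupp\rho_1 = \cosupp\rho_2$. Then the unique linear map $\tau\colon\supp\rho_2\to\supp\rho_1$ satisfying $(\mathrm{id}_B\otimes\tau)\circ\rho_2' = \rho_1'$ (where $\rho_i'$ is the corestriction of $\rho_i$ to $B\otimes\supp\rho_i$) is a linear isomorphism. -/
open TensorProduct

variable {F A B Q : Type*} [Field F] [AddCommGroup A] [Module F A]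
  [AddCommGroup B] [Module F B] [AddCommGroup Q] [Module F Q]

/-!
For a corestriction `ρ'` of `ρ` to `B ⊗ supp ρ`, the map `(supp ρ)^* → Hom(A, B)`,
`q^* ↦ (id_B ⊗ q^*) ∘ ρ'`, is injective: if `q^*` is sent to `0` then, `B ⊗ -` being exact
over a field, `ρ` factors through `B ⊗ ker q^*`, so minimality of the support forces `q^* = 0`.
Its image is `cosupp ρ`, because functionals on `supp ρ` extend to `Q`. The relation
`(id_B ⊗ τ) ∘ ρ₂' = ρ₁'` says that this map for `ρ₁'` is the one for `ρ₂'` precomposed with `τ^*`;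
two injections with the same image then make `τ^*`, hence `τ`, bijective.
-/

lemma cosuppL_lTensor_comp_s3 {P P' : Type*} [AddCommGroup P] [Module F P]
    [AddCommGroup P'] [Module F P'] (σ : A →ₗ[F] B ⊗[F] P) (g : P →ₗ[F] P') :
    cosuppL (LinearMap.lTensor B g ∘ₗ σ) = cosuppL σ ∘ₗ g.dualMap := by
  ext f a
  simp [cosuppL, ← LinearMap.lTensor_comp_apply, LinearMap.dualMap_apply']

lemma LiftsTo.lTensor_comp {P : Type*} [AddCommGroup P] [Module F P]
    {σ : A →ₗ[F] B ⊗[F] P} {K : Submodule F P} (hσ : LiftsTo σ K) (g : P →ₗ[F] Q) :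
    LiftsTo (LinearMap.lTensor B g ∘ₗ σ) (K.map g) := by
  intro a
  obtain ⟨y, hy⟩ := hσ a
  refine ⟨LinearMap.lTensor B (g.submoduleMap K) y, ?_⟩
  have hcomp : (K.map g).subtype ∘ₗ g.submoduleMap K = g ∘ₗ K.subtype := rfl
  rw [← LinearMap.lTensor_comp_apply, hcomp, LinearMap.lTensor_comp_apply, hy,
    LinearMap.comp_apply]

lemma lsupp_le {ρ : A →ₗ[F] B ⊗[F] Q} {K : Submodule F Q} (hρ : LiftsTo ρ K) :
    lsupp ρ ≤ K :=
  sInf_le hρ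

lemma liftsTo_ker_of_cosuppL_eq_zero {ρ : A →ₗ[F] B ⊗[F] Q} {f : Module.Dual F Q}
    (hf : cosuppL ρ f = 0) : LiftsTo ρ (LinearMap.ker f) := by
  intro a
  refine (Module.Flat.lTensor_exact B (LinearMap.exact_subtype_ker_map f) (ρ a)).mp ?_
  simpa [cosuppL] using LinearMap.congr_fun hf a

lemma cosuppL_corestrict_injective (ρ : A →ₗ[F] B ⊗[F] Q) (ρ' : A →ₗ[F] B ⊗[F] (lsupp ρ))
    (hρ : LinearMap.lTensor B (lsupp ρ).subtype ∘ₗ ρ' = ρ) :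
    Function.Injective (cosuppL ρ') := by
  rw [← LinearMap.ker_eq_bot, LinearMap.ker_eq_bot']
  intro f hf
  have hle : lsupp ρ ≤ (LinearMap.ker f).map (lsupp ρ).subtype := by
    have hlifts := (liftsTo_ker_of_cosuppL_eq_zero hf).lTensor_comp (lsupp ρ).subtype
    rw [hρ] at hlifts
    exact lsupp_le hlifts
  rw [← Submodule.comap_subtype_eq_top, Submodule.comap_map_eq_of_injective
    (lsupp ρ).injective_subtype, LinearMap.ker_eq_top] at hle
  exact hle

lemma range_cosuppL_corestrict (ρ : A →ₗ[F] B ⊗[F] Q) (ρ' : A →ₗ[F] B ⊗[F] (lsupp ρ))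
    (hρ : LinearMap.lTensor B (lsupp ρ).subtype ∘ₗ ρ' = ρ) :
    LinearMap.range (cosuppL ρ') = lcosupp ρ := by
  conv_rhs => rw [lcosupp, ← hρ]
  rw [cosuppL_lTensor_comp_s3, LinearMap.range_comp,
    LinearMap.range_eq_top.mpr (LinearMap.dualMap_surjective_of_injective
      (lsupp ρ).injective_subtype), Submodule.map_top]

lemma Function.bijective_of_comp_eq {α β γ : Type*} {g₁ : α → γ} {g₂ : β → γ} {φ : α → β}
    (h₁ : Function.Injective g₁) (h₂ : Function.Injective g₂)
    (hrange : Set.range g₂ ⊆ Set.range g₁) (hφ : g₂ ∘ φ = g₁) : Function.Bijective φ := by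
  refine ⟨.of_comp (f := g₂) (hφ ▸ h₁), fun y => ?_⟩
  obtain ⟨x, hx⟩ := hrange ⟨y, rfl⟩
  exact ⟨x, h₂ (by rw [← hx, ← hφ, Function.comp_apply])⟩

variable {Q₂ : Type*} [AddCommGroup Q₂] [Module F Q₂]

/-- If `ρ₁` and `ρ₂` have equal cosupports, then any linear map `τ : supp ρ₂ → supp ρ₁`
satisfying `(id_B ⊗ τ) ∘ ρ₂' = ρ₁'` is a linear isomorphism (i.e. bijective). -/
theorem factor_bijective_of_lcosupp_eq (ρ₁ : A →ₗ[F] B ⊗[F] Q) (ρ₂ : A →ₗ[F] B ⊗[F] Q₂)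
    (h : lcosupp ρ₁ = lcosupp ρ₂)
    (ρ₁' : A →ₗ[F] B ⊗[F] (lsupp ρ₁)) (hρ₁ : LinearMap.lTensor B (lsupp ρ₁).subtype ∘ₗ ρ₁' = ρ₁)
    (ρ₂' : A →ₗ[F] B ⊗[F] (lsupp ρ₂)) (hρ₂ : LinearMap.lTensor B (lsupp ρ₂).subtype ∘ₗ ρ₂' = ρ₂)
    (τ : (lsupp ρ₂) →ₗ[F] (lsupp ρ₁)) (hτ : LinearMap.lTensor B τ ∘ₗ ρ₂' = ρ₁') :
    Function.Bijective τ := by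
  rw [← LinearMap.dualMap_bijective_iff]
  refine Function.bijective_of_comp_eq (g₁ := cosuppL ρ₁') (g₂ := cosuppL ρ₂')
    (cosuppL_corestrict_injective ρ₁ ρ₁' hρ₁) (cosuppL_corestrict_injective ρ₂ ρ₂' hρ₂) ?_ ?_
  · rw [← LinearMap.coe_range, ← LinearMap.coe_range, range_cosuppL_corestrict ρ₁ ρ₁' hρ₁,
      range_cosuppL_corestrict ρ₂ ρ₂' hρ₂, h]
  · rw [← hτ, cosuppL_lTensor_comp_s3]
    rfl
end

section
/- For any vector spaces $A$, $B$, $Q$ over a field $F$ and any linear map $\rho \colon A \to B \otimes Q$, the subspace $\{(\mathrm{id}_B \otimes q^*)\circ\rho \mid q^* \in Q^*\} \subseteq \mathrm{Hom}_F(A,B)$ is closed in the finite topology on $\mathrm{Hom}_F(A,B)$. -/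
open TensorProduct

variable {F A B Q : Type*} [Field F] [AddCommGroup A] [Module F A]
  [AddCommGroup B] [Module F B] [AddCommGroup Q] [Module F Q]

/-- The finite topology on `Hom_F(A,B)`: the topology of pointwise convergence,
where `B` carries the discrete topology. -/
def finiteTopology (F A B : Type*) [Field F] [AddCommGroup A] [Module F A]
    [AddCommGroup B] [Module F B] : TopologicalSpace (A →ₗ[F] B) :=
  TopologicalSpace.induced (fun f : A →ₗ[F] B => (f : A → B))
    (@Pi.topologicalSpace A (fun _ => B) (fun _ => ⊥))

/-! Testing against all `ℓ ∈ B^*`, the condition `(id_B ⊗ q^*)(ρ a) = f a` becomes the family of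
linear equations `q^*((ℓ ⊗ id_Q)(ρ a)) = ℓ (f a)` on `q^*`. A point `f` of the closure makes every
finite subfamily solvable, and a finitely solvable system of linear equations on `Q^*` is solvable:
the equations span a subspace of `Q × F` that is the graph of a partial functional on `Q`, which
extends to all of `Q`. -/

theorem Module.Dual.exists_forall_apply_eq_of_forall_finset {ι : Type*} (x : ι → Q) (c : ι → F)
    (h : ∀ s : Finset ι, ∃ q : Module.Dual F Q, ∀ i ∈ s, q (x i) = c i) :
    ∃ q : Module.Dual F Q, ∀ i, q (x i) = c i := by
  set R := Submodule.span F (Set.range fun i => (x i, c i))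
  have hR : ∀ y ∈ R, y.1 = 0 → y.2 = 0 := by
    intro y hy hy₁
    obtain ⟨a, ha⟩ := Finsupp.mem_span_range_iff_exists_finsupp.1 hy
    obtain ⟨q, hq⟩ := h a.support
    have hvanish : (LinearMap.snd F Q F - q ∘ₗ LinearMap.fst F Q F) y = 0 := by
      rw [← ha, map_finsuppSum]
      exact Finset.sum_eq_zero fun i hi => by simp [hq i hi]
    simpa [hy₁] using hvanish
  obtain ⟨q, hq⟩ := LinearMap.exists_extend R.toLinearPMap.toFun
  refine ⟨q, fun i => ?_⟩
  have hi : (x i, c i) ∈ R.toLinearPMap.graph :=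
    (Submodule.toLinearPMap_graph_eq R hR).symm ▸ Submodule.subset_span ⟨i, rfl⟩
  obtain ⟨y, hy₁ : (y : Q) = x i, hy₂ : _ = c i⟩ := (LinearPMap.mem_graph_iff _).1 hi
  rw [← hy₁, ← hy₂]
  exact LinearMap.congr_fun hq y

theorem Module.Dual.apply_rid_lTensor (ℓ : Module.Dual F B) (q : Module.Dual F Q)
    (t : B ⊗[F] Q) :
    ℓ (TensorProduct.rid F B (q.lTensor B t)) = q (TensorProduct.lid F Q (ℓ.rTensor Q t)) := by
  induction t using TensorProduct.induction_on with
  | zero => simp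
  | tmul b y => simp [mul_comm]
  | add t₁ t₂ h₁ h₂ => simp [h₁, h₂]

theorem cosuppL_apply_eq_iff (ρ : A →ₗ[F] B ⊗[F] Q) (q : Module.Dual F Q) (a : A) (b : B) :
    cosuppL ρ q a = b ↔
      ∀ ℓ : Module.Dual F B, q (TensorProduct.lid F Q (ℓ.rTensor Q (ρ a))) = ℓ b := by
  simp_rw [← Module.Dual.apply_rid_lTensor, ← sub_eq_zero (b := b),
    ← Module.forall_dual_apply_eq_zero_iff F (cosuppL ρ q a - b), map_sub, sub_eq_zero]
  rfl

theorem exists_agree_on_finset_of_mem_closure_finiteTopology {S : Set (A →ₗ[F] B)}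
    {f : A →ₗ[F] B} (hf : f ∈ @closure _ (finiteTopology F A B) S) (s : Finset A) :
    ∃ g ∈ S, ∀ a ∈ s, g a = f a := by
  let _ : TopologicalSpace B := ⊥
  have : DiscreteTopology B := ⟨rfl⟩
  have hopen : IsOpen ((s : Set A).pi fun a => ({f a} : Set B)) :=
    isOpen_set_pi s.finite_toSet fun _ _ => isOpen_discrete _
  obtain ⟨g, hg, hgS⟩ := @mem_closure_iff _ (finiteTopology F A B) _ _ |>.1 hf _
    (isOpen_induced hopen) fun a _ => rfl
  exact ⟨g, hgS, hg⟩

/-- The cosupport `{(id_B ⊗ q^*) ∘ ρ | q^* ∈ Q^*}` of any linear map `ρ : A → B ⊗ Q`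
is closed in the finite topology on `Hom_F(A,B)`. -/
theorem lcosupp_isClosed (ρ : A →ₗ[F] B ⊗[F] Q) :
    @IsClosed _ (finiteTopology F A B) ((lcosupp ρ : Submodule F (A →ₗ[F] B)) : Set (A →ₗ[F] B)) := by
  classical
  let _ := finiteTopology F A B
  refine isClosed_of_closure_subset fun f hf => ?_
  obtain ⟨q, hq⟩ := Module.Dual.exists_forall_apply_eq_of_forall_finset
    (fun i : A × Module.Dual F B => TensorProduct.lid F Q (i.2.rTensor Q (ρ i.1)))
    (fun i => i.2 (f i.1)) fun s => by
      obtain ⟨_, ⟨q, rfl⟩, hq⟩ := exists_agree_on_finset_of_mem_closure_finiteTopology hf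
        (s.image Prod.fst)
      exact ⟨q, fun i hi => (cosuppL_apply_eq_iff ρ q i.1 _).1
        (hq i.1 (Finset.mem_image_of_mem _ hi)) i.2⟩
  exact ⟨q, LinearMap.ext fun a => (cosuppL_apply_eq_iff ρ q a _).2 fun ℓ => hq (a, ℓ)⟩
end

section
/- Let $V$ be a vector space over a field $F$. Then the canonical image of $V$ in its double dual $V^{**}$ is dense in the finite topology: for every finite dimensional subspace $T \subseteq V^*$ and every $v^{**} \in V^{**}$, there exists $v \in V$ such that $v^{**}(t) = t(v)$ for all $t \in T$. -/
/-! The pairing `V ⧸ T° × T → F`, where `T°` is the common kernel of the functionals in `T`,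
is nondegenerate. As `T` is finite dimensional, the injection `V ⧸ T° → T^*` it induces is
therefore bijective, so every functional on `T`, in particular the restriction of `v^{**}`,
is evaluation at some `v ∈ V`. -/

open Module

theorem Subspace.exists_eq_apply_of_finiteDimensional {K V : Type*} [Field K] [AddCommGroup V]
    [Module K V] (W : Subspace K (Dual K V)) [FiniteDimensional K W] (φ : Dual K W) :
    ∃ v : V, ∀ w : W, φ w = (w : Dual K V) v := by
  obtain ⟨q, hq⟩ := W.quotDualCoannihilatorToDual_bijective.2 φ
  obtain ⟨v, rfl⟩ := Submodule.Quotient.mk_surjective _ q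
  exact ⟨v, fun w => (LinearMap.congr_fun hq w).symm⟩

/-- A vector space `V` is dense in its double dual `V^{**}` in the finite topology:
for every finite dimensional subspace `T ⊆ V^*` and every `v^{**} ∈ V^{**}` there exists
`v ∈ V` with `v^{**}(t) = t(v)` for all `t ∈ T`. -/
theorem dense_in_double_dual {F V : Type*} [Field F] [AddCommGroup V] [Module F V]
    (T : Submodule F (Module.Dual F V)) (hT : FiniteDimensional F T)
    (vdd : Module.Dual F (Module.Dual F V)) :
    ∃ v : V, ∀ t ∈ T, vdd t = t v := by
  obtain ⟨v, hv⟩ := Subspace.exists_eq_apply_of_finiteDimensional T (vdd ∘ₗ T.subtype)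
  exact ⟨v, fun t ht => hv ⟨t, ht⟩⟩
end
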